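/- Let 𝛂 be a generalized composition of n. There is exactly one standard ribbon tableau T of shape 𝛂 (the sink tableau T^←_𝛂) such that for every i ∈ {1,...,n-1}, π_i·T ∈ {0, T}; it is obtained by filling rd(𝛂) with 1,2,...,n from left to right in each row, rows taken top to bottom. -/

import Mathlib

/-- The cells of the ribbon diagram of a composition `α`, as pairs
`(column, height)` (0-based columns from the left, heights increasing upward):
column `j` occupies the heights `[(α₁+⋯+α_j) - j, (α₁+⋯+α_{j+1}) - j - 1]`,
so that consecutive columns overlap in exactly one row, each column sitting
above-right of the previous one. -/
def ribbonCells (α : List ℕ) : Set (ℕ × ℕ) :=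
  {jh | jh.1 < α.length ∧ (α.take jh.1).sum - jh.1 ≤ jh.2 ∧
        jh.2 < (α.take jh.1).sum - jh.1 + α.getD jh.1 0}

/-- Column offset of the `m`-th component of a generalized ribbon diagram. -/
def colOff (L : List (List ℕ)) (m : ℕ) : ℕ := ((L.take m).map List.length).sum

/-- Height offset of the `m`-th component of a generalized ribbon diagram
(each component is placed strictly to the northeast of the previous one,
one row above its top). -/
def htOff (L : List (List ℕ)) (m : ℕ) : ℕ :=
  ((L.take m).map fun l => l.sum - l.length + 1).sum

/-- The cells of the generalized ribbon diagram of `𝛂 = α⁽¹⁾ ⊕ ⋯ ⊕ α⁽ᵏ⁾`. -/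
def gribbonCells (L : List (List ℕ)) : Set (ℕ × ℕ) :=
  {jh | ∃ m < L.length, ∃ c ∈ ribbonCells (L.getD m []),
    jh = (colOff L m + c.1, htOff L m + c.2)}

/-- The size `n` of the generalized composition `𝛂`. -/
def srtSize (L : List (List ℕ)) : ℕ := (L.map List.sum).sum

/-- A standard ribbon tableau of shape `𝛂`, encoded by the position
`p e = (column, height)` of each entry `e ∈ {1,…,n}` (heights increase upward):
entries fill the diagram bijectively, increase from left to right in each row
(cells of equal height), and increase from top to bottom in each column
(i.e. decrease with height).  (Entries outside `{1,…,n}` are normalized.) -/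
def IsSRT (L : List (List ℕ)) (p : ℕ → ℕ × ℕ) : Prop :=
  Set.BijOn p (Set.Icc 1 (srtSize L)) (gribbonCells L) ∧
  (∀ a ∈ Set.Icc 1 (srtSize L), ∀ b ∈ Set.Icc 1 (srtSize L),
    (p a).2 = (p b).2 → (p a).1 < (p b).1 → a < b) ∧
  (∀ a ∈ Set.Icc 1 (srtSize L), ∀ b ∈ Set.Icc 1 (srtSize L),
    (p a).1 = (p b).1 → (p b).2 < (p a).2 → a < b) ∧
  (∀ e : ℕ, e ∉ Set.Icc 1 (srtSize L) → p e = (0, 0))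

/-- `T` satisfies `π_i · T ∈ {0, T}` for all `i ∈ {1,…,n-1}`: for no `i` is `i`
strictly below `i+1` (which is the only case where `π_i · T` is a different
tableau `s_i · T`). -/
def IsSinkSRT (L : List (List ℕ)) (T : {p : ℕ → ℕ × ℕ // IsSRT L p}) : Prop :=
  ∀ i : ℕ, 1 ≤ i → i + 1 ≤ srtSize L → ¬ (T.1 i).2 < (T.1 (i + 1)).2

/-- `T` is the row-reading filling: the diagram is filled with `1, 2, …, n` from
left to right in each row, rows taken from top to bottom (larger height first;
within a row, smaller column first). -/
def IsRowReadingSRT (L : List (List ℕ)) (T : {p : ℕ → ℕ × ℕ // IsSRT L p}) : Prop :=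
  ∀ a ∈ Set.Icc 1 (srtSize L), ∀ b ∈ Set.Icc 1 (srtSize L),
    ((T.1 b).2 < (T.1 a).2 ∨ ((T.1 a).2 = (T.1 b).2 ∧ (T.1 a).1 < (T.1 b).1)) →
    a < b

/-!
Order the cells by reading order: higher rows first, left to right within a row. This order
refines both the row order and the column order of a tableau, so a filling whose entries
increase in reading order is automatically standard; such a filling exists and is unique, being
the increasing enumeration of the finite set of cells. The sink condition says that the row of
`i + 1` is never above the row of `i`, so rows weakly descend as the entries grow; together
with the increase along rows this forces the entries to increase in reading order.
-/

open Finset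

lemma range_fin_val_add_one (n : ℕ) :
    Set.range (fun i : Fin n => (i : ℕ) + 1) = Set.Icc 1 n := by
  ext e
  refine ⟨?_, fun he => ⟨⟨e - 1, by grind⟩, by grind⟩⟩
  rintro ⟨i, rfl⟩
  exact ⟨Nat.le_add_left 1 i, i.2⟩

section Enumeration

variable {α : Type*} [LinearOrder α]

lemma eqOn_of_bijOn_of_strictMonoOn {n : ℕ} {S : Set α} {f g : ℕ → α}
    (hf : Set.BijOn f (Set.Icc 1 n) S) (hg : Set.BijOn g (Set.Icc 1 n) S)
    (hf' : StrictMonoOn f (Set.Icc 1 n)) (hg' : StrictMonoOn g (Set.Icc 1 n)) :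
    Set.EqOn f g (Set.Icc 1 n) := by
  have hshift (i : Fin n) : (i : ℕ) + 1 ∈ Set.Icc 1 n :=
    range_fin_val_add_one n ▸ ⟨i, rfl⟩
  have hmono {h : ℕ → α} (hh : StrictMonoOn h (Set.Icc 1 n)) :
      StrictMono fun i : Fin n => h (i + 1) :=
    fun i j hij => hh (hshift i) (hshift j) (by simpa using hij)
  have key : (fun i : Fin n => f (i + 1)) = fun i : Fin n => g (i + 1) := by
    refine (hmono hf').range_inj (hmono hg') |>.mp ?_
    rw [Set.range_comp' f, Set.range_comp' g, range_fin_val_add_one, hf.image_eq, hg.image_eq]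
  rintro e ⟨he1, he2⟩
  simpa [Nat.sub_add_cancel he1] using congrFun key (⟨e - 1, by omega⟩ : Fin n)

lemma exists_bijOn_strictMonoOn (s : Finset α) (d : α) :
    ∃ f : ℕ → α, Set.BijOn f (Set.Icc 1 #s) s ∧ StrictMonoOn f (Set.Icc 1 #s) ∧
      ∀ e ∉ Set.Icc 1 #s, f e = d := by
  set emb := s.orderEmbOfFin rfl
  have hinj : Function.Injective fun i : Fin #s => (i : ℕ) + 1 :=
    fun i j h => Fin.ext (by simpa using h)
  set f := Function.extend (fun i : Fin #s => (i : ℕ) + 1) emb fun _ => d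
  have hf (i : Fin #s) : f (i + 1) = emb i := hinj.extend_apply _ _ i
  have hmono : StrictMonoOn f (Set.Icc 1 #s) := by
    rw [← range_fin_val_add_one]
    rintro _ ⟨i, rfl⟩ _ ⟨j, rfl⟩ hij
    simpa [hf] using hij
  have himage : f '' Set.Icc 1 #s = s := by
    rw [← range_fin_val_add_one, ← Set.range_comp]
    simp only [Function.comp_def, hf, emb, range_orderEmbOfFin]
  refine ⟨f, himage ▸ hmono.injOn.bijOn_image, hmono, fun e he => ?_⟩
  rw [← range_fin_val_add_one] at he
  exact Function.extend_apply' _ _ _ fun ⟨i, hi⟩ => he ⟨i, hi⟩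

end Enumeration

lemma sum_range_length_getD {ι M : Type*} [AddCommMonoid M] (l : List ι) (d : ι) (f : ι → M) :
    ∑ i ∈ range l.length, f (l.getD i d) = (l.map f).sum := by
  rw [Finset.sum_range, ← Fin.sum_univ_fun_getElem]
  simp

def ribbonFinset (α : List ℕ) : Finset (ℕ × ℕ) :=
  (range α.length).biUnion fun j =>
    {j} ×ˢ Ico ((α.take j).sum - j) ((α.take j).sum - j + α.getD j 0)

lemma coe_ribbonFinset (α : List ℕ) : (ribbonFinset α : Set (ℕ × ℕ)) = ribbonCells α := by
  ext ⟨j, h⟩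
  simp [ribbonFinset, ribbonCells, and_left_comm]

lemma card_ribbonFinset (α : List ℕ) : #(ribbonFinset α) = α.sum := by
  rw [ribbonFinset, card_biUnion fun i _ j _ hij =>
    disjoint_product.mpr (Or.inl (disjoint_singleton.mpr hij))]
  simpa using sum_range_length_getD α 0 id

lemma colOff_eq_sum_take (L : List (List ℕ)) (m : ℕ) :
    colOff L m = ((L.map List.length).take m).sum := by
  rw [colOff, List.map_take]

lemma colOff_monotone (L : List (List ℕ)) : Monotone (colOff L) := by
  intro a b hab
  simpa only [colOff_eq_sum_take] using List.monotone_sum_take _ hab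

lemma colOff_succ {L : List (List ℕ)} {m : ℕ} (hm : m < L.length) :
    colOff L (m + 1) = colOff L m + (L.getD m []).length := by
  simp [colOff_eq_sum_take, hm]

def componentFinset (L : List (List ℕ)) (m : ℕ) : Finset (ℕ × ℕ) :=
  (ribbonFinset (L.getD m [])).image fun c => (colOff L m + c.1, htOff L m + c.2)

lemma colOff_le_of_mem_componentFinset {L : List (List ℕ)} {m : ℕ} {c : ℕ × ℕ}
    (hc : c ∈ componentFinset L m) : colOff L m ≤ c.1 := by
  obtain ⟨c, -, rfl⟩ := mem_image.mp hc
  exact Nat.le_add_right _ _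

lemma lt_colOff_succ_of_mem_componentFinset {L : List (List ℕ)} {m : ℕ} {c : ℕ × ℕ}
    (hm : m < L.length) (hc : c ∈ componentFinset L m) : c.1 < colOff L (m + 1) := by
  obtain ⟨c, hc', rfl⟩ := mem_image.mp hc
  rw [colOff_succ hm]
  exact Nat.add_lt_add_left ((coe_ribbonFinset _ ▸ hc' : c ∈ ribbonCells _).1) _

lemma disjoint_componentFinset {L : List (List ℕ)} {x y : ℕ} (hx : x < L.length) (hxy : x < y) :
    Disjoint (componentFinset L x) (componentFinset L y) :=
  disjoint_left.mpr fun _ hcx hcy => (lt_colOff_succ_of_mem_componentFinset hx hcx).not_ge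
    ((colOff_monotone L hxy).trans (colOff_le_of_mem_componentFinset hcy))

lemma card_componentFinset (L : List (List ℕ)) (m : ℕ) :
    #(componentFinset L m) = (L.getD m []).sum := by
  rw [componentFinset, card_image_of_injective _ fun a b h => ?_, card_ribbonFinset]
  simp only [Prod.mk.injEq, Nat.add_left_cancel_iff] at h
  exact Prod.ext h.1 h.2

def gribbonFinset (L : List (List ℕ)) : Finset (ℕ × ℕ) :=
  (range L.length).biUnion (componentFinset L)

lemma coe_gribbonFinset (L : List (List ℕ)) :
    (gribbonFinset L : Set (ℕ × ℕ)) = gribbonCells L := by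
  ext c
  simp [gribbonFinset, componentFinset, gribbonCells, ← coe_ribbonFinset, eq_comm]

lemma card_gribbonFinset (L : List (List ℕ)) : #(gribbonFinset L) = srtSize L := by
  rw [gribbonFinset, card_biUnion fun x hx y hy hxy => ?_]
  · simp only [card_componentFinset, srtSize]
    exact sum_range_length_getD L [] List.sum
  rcases Nat.lt_or_gt_of_ne hxy with h | h
  · exact disjoint_componentFinset (mem_range.mp hx) h
  · exact (disjoint_componentFinset (mem_range.mp hy) h).symm

def readingKey : ℕ × ℕ ≃ ℕᵒᵈ ×ₗ ℕ where
  toFun c := toLex (OrderDual.toDual c.2, c.1)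
  invFun k := ((ofLex k).2, OrderDual.ofDual (ofLex k).1)
  left_inv _ := rfl
  right_inv _ := rfl

lemma readingKey_lt_readingKey {a b : ℕ × ℕ} :
    readingKey a < readingKey b ↔ b.2 < a.2 ∨ a.2 = b.2 ∧ a.1 < b.1 := by
  change toLex (OrderDual.toDual a.2, a.1) < toLex (OrderDual.toDual b.2, b.1) ↔ _
  simp [Prod.Lex.toLex_lt_toLex]

section Tableaux

variable {L : List (List ℕ)}

lemma isSRT_of_strictMonoOn {p : ℕ → ℕ × ℕ}
    (hbij : Set.BijOn p (Set.Icc 1 (srtSize L)) (gribbonCells L))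
    (hmono : StrictMonoOn (readingKey ∘ p) (Set.Icc 1 (srtSize L)))
    (hout : ∀ e ∉ Set.Icc 1 (srtSize L), p e = (0, 0)) : IsSRT L p := by
  refine ⟨hbij, fun a ha b hb hrow hcol => ?_, fun a ha b hb hcol hrow => ?_, hout⟩
  · exact (hmono.lt_iff_lt ha hb).mp (readingKey_lt_readingKey.mpr (Or.inr ⟨hrow, hcol⟩))
  · exact (hmono.lt_iff_lt ha hb).mp (readingKey_lt_readingKey.mpr (Or.inl hrow))

lemma isSinkSRT_of_strictMonoOn {T : {p : ℕ → ℕ × ℕ // IsSRT L p}}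
    (hmono : StrictMonoOn (readingKey ∘ T.1) (Set.Icc 1 (srtSize L))) : IsSinkSRT L T := by
  intro i hi hi' hlt
  have := readingKey_lt_readingKey.mp (hmono ⟨hi, by omega⟩ ⟨by omega, hi'⟩ i.lt_succ_self)
  omega

lemma IsSinkSRT.isRowReadingSRT {T : {p : ℕ → ℕ × ℕ // IsSRT L p}} (hT : IsSinkSRT L T) :
    IsRowReadingSRT L T := by
  have hanti : AntitoneOn (fun e => (T.1 e).2) (Set.Icc 1 (srtSize L)) :=
    antitoneOn_of_add_one_le Set.ordConnected_Icc fun a _ ha ha' => not_lt.mp (hT a ha.1 ha'.2)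
  rintro a ha b hb (hrow | ⟨hrow, hcol⟩)
  · by_contra! hba
    exact (hanti hb ha hba).not_gt hrow
  · exact T.2.2.1 a ha b hb hrow hcol

lemma IsRowReadingSRT.strictMonoOn {T : {p : ℕ → ℕ × ℕ // IsSRT L p}}
    (hT : IsRowReadingSRT L T) : StrictMonoOn (readingKey ∘ T.1) (Set.Icc 1 (srtSize L)) := by
  intro a ha b hb hab
  rcases lt_trichotomy (readingKey (T.1 a)) (readingKey (T.1 b)) with h | h | h
  · exact h
  · exact absurd (T.2.1.injOn ha hb (readingKey.injective h)) hab.ne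
  · exact absurd (hT b hb a ha (readingKey_lt_readingKey.mp h)) hab.not_gt

lemma eq_of_isRowReadingSRT {T T' : {p : ℕ → ℕ × ℕ // IsSRT L p}}
    (hT : IsRowReadingSRT L T) (hT' : IsRowReadingSRT L T') : T = T' := by
  have hbij {p : ℕ → ℕ × ℕ} (hp : IsSRT L p) : Set.BijOn (readingKey ∘ p)
      (Set.Icc 1 (srtSize L)) (readingKey '' gribbonCells L) :=
    (readingKey.injective.injOn (s := gribbonCells L)).bijOn_image.comp hp.1
  refine Subtype.ext (funext fun e => ?_)
  by_cases he : e ∈ Set.Icc 1 (srtSize L)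
  · exact readingKey.injective (eqOn_of_bijOn_of_strictMonoOn (hbij T.2) (hbij T'.2)
      hT.strictMonoOn hT'.strictMonoOn he)
  · rw [T.2.2.2.2 e he, T'.2.2.2.2 e he]

lemma exists_isSinkSRT (L : List (List ℕ)) :
    ∃ T : {p : ℕ → ℕ × ℕ // IsSRT L p}, IsSinkSRT L T := by
  obtain ⟨f, hbij, hmono, hout⟩ :=
    exists_bijOn_strictMonoOn ((gribbonFinset L).map readingKey.toEmbedding) (readingKey (0, 0))
  simp only [card_map, card_gribbonFinset, coe_map, coe_gribbonFinset,
    Equiv.coe_toEmbedding] at hbij hmono hout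
  have hp : IsSRT L (readingKey.symm ∘ f) := by
    refine isSRT_of_strictMonoOn ?_ (by simpa [Function.comp_def] using hmono) fun e he => ?_
    · simpa using (readingKey.symm.injective.injOn.bijOn_image).comp hbij
    · simp [hout e he]
  exact ⟨⟨_, hp⟩, isSinkSRT_of_strictMonoOn (by simpa [Function.comp_def] using hmono)⟩

end Tableaux

theorem stmt19_general (L : List (List ℕ)) :
    (∃! T : {p : ℕ → ℕ × ℕ // IsSRT L p}, IsSinkSRT L T) ∧
    (∀ T : {p : ℕ → ℕ × ℕ // IsSRT L p}, IsSinkSRT L T → IsRowReadingSRT L T) := by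
  obtain ⟨T₀, hT₀⟩ := exists_isSinkSRT L
  exact ⟨⟨T₀, hT₀, fun T hT => eq_of_isRowReadingSRT hT.isRowReadingSRT hT₀.isRowReadingSRT⟩,
    fun T hT => hT.isRowReadingSRT⟩

/-- there is exactly one standard ribbon tableau `T` of shape `𝛂`
with `π_i · T ∈ {0, T}` for all `i ∈ {1,…,n-1}` (the sink tableau `T^←_𝛂`), and
it is obtained by filling the diagram with `1,…,n` left to right in each row,
rows taken top to bottom. -/
theorem stmt19 (L : List (List ℕ)) (hL : ∀ l ∈ L, l ≠ [] ∧ ∀ x ∈ l, 0 < x) :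
    (∃! T : {p : ℕ → ℕ × ℕ // IsSRT L p}, IsSinkSRT L T) ∧
    (∀ T : {p : ℕ → ℕ × ℕ // IsSRT L p}, IsSinkSRT L T → IsRowReadingSRT L T) :=
  stmt19_general L
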